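/- arXiv:1711.01491 — 2 statements merged into one kernel-verified Lean document; each statement's English description precedes it below -/
import Mathlib

section
/- Let s ∈ (0,1), θ₀, r₀ > 0 with r₀ ≤ 1, and let K satisfy K(r) ≥ θ₀|r|^{−1−2s} for |r| ≤ r₀ and K ≥ 0, K even. Let P : ℝ → ℝ be the gluing function from the previous context: P Lipschitz with constant ρ on (x₁, x₂), constant equal to ζ₂ on (x₁+1, x₂−1), with |P(x) − P(y)| ≤ 2ρ for x, y ∈ (x₁, x₂), and suppose also K(r) ≤ Θ₀|r|^{−1−2s} for all r. Then ∬_{(x₁,x₂)²} |P(x)−P(y)|² K(x−y) dx dy ≤ κ ρ², where κ depends only on Θ₀ and s (not on x₂ − x₁). -/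
open MeasureTheory Set
open scoped Convolution

/-!
Near the diagonal the Lipschitz bound, away from it the oscillation bound, together with
`K r ≤ Θ₀ |r|^(-1-2s)`, give `(P x - P y)² K (x - y) ≤ Θ₀ ρ² k (x - y)` with the integrable
kernel `k r = min (r², 4) |r|^(-1-2s)`. Since `P` is constant on `(x₁ + 1, x₂ - 1)`, the integrand
vanishes unless `x` or `y` lies in the set `S` of measure `2` next to the endpoints, so the double
integral is at most `2 |S| Θ₀ ρ² ∫ k`, whatever the length `x₂ - x₁`.
-/

theorem integrable_comp_abs_of_integrableOn_Ioi {f : ℝ → ℝ} (hf : IntegrableOn f (Ioi 0)) :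
    Integrable (fun x => f |x|) := by
  have hIoi : IntegrableOn (fun x => f |x|) (Ioi 0) :=
    hf.congr_fun (fun x hx => by rw [abs_of_pos hx]) measurableSet_Ioi
  have hIic : IntegrableOn (fun x => f |x|) (Iic 0) := by
    rw [IntegrableOn, ← Measure.map_neg_eq_self (volume : Measure ℝ),
      ← IntegrableOn, (measurableEmbedding_neg (α := ℝ)).integrableOn_map_iff]
    simp_rw [Function.comp_def, abs_neg, neg_preimage, neg_Iic, neg_zero]
    exact (integrableOn_Ici_iff_integrableOn_Ioi).2 hIoi
  simpa [Iic_union_Ioi] using hIic.union hIoi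

-- `ρ² min (r², 4)` bounds `(P x - P y)²` by the Lipschitz and the oscillation bound at once.
noncomputable def cutoffKernel (s r : ℝ) : ℝ :=
  min (|r| ^ 2) 4 * |r| ^ (-(1 + 2 * s))

@[simp]
theorem cutoffKernel_zero (s : ℝ) : cutoffKernel s 0 = 0 := by
  simp [cutoffKernel]

theorem cutoffKernel_nonneg (s r : ℝ) : 0 ≤ cutoffKernel s r := by
  unfold cutoffKernel; positivity

theorem cutoffKernel_pos {s r : ℝ} (hr : r ≠ 0) : 0 < cutoffKernel s r := by
  have := abs_pos.mpr hr
  unfold cutoffKernel; positivity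

theorem integrable_cutoffKernel {s : ℝ} (hs0 : 0 < s) (hs1 : s < 1) :
    Integrable (cutoffKernel s) := by
  set k : ℝ → ℝ := fun t => min (t ^ 2) 4 * t ^ (-(1 + 2 * s))
  have hk : Measurable k := by fun_prop
  have hnear : IntegrableOn k (Ioc 0 2) := by
    have hpow : IntegrableOn (fun t : ℝ => t ^ (1 - 2 * s)) (Ioc 0 2) :=
      (intervalIntegrable_iff_integrableOn_Ioc_of_le zero_le_two).mp
        (intervalIntegral.intervalIntegrable_rpow' (by linarith))
    refine hpow.mono' hk.aestronglyMeasurable.restrict ?_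
    filter_upwards [ae_restrict_mem measurableSet_Ioc] with t ht
    have ht0 := ht.1
    rw [Real.norm_of_nonneg (by positivity),
      show 1 - 2 * s = (2 : ℕ) + -(1 + 2 * s) by push_cast; ring, Real.rpow_add ht0,
      Real.rpow_natCast]
    exact mul_le_mul_of_nonneg_right (min_le_left _ _) (by positivity)
  have hfar : IntegrableOn k (Ioi 2) := by
    have hpow : IntegrableOn (fun t : ℝ => 4 * t ^ (-(1 + 2 * s))) (Ioi 2) :=
      (integrableOn_Ioi_rpow_of_lt (by linarith) two_pos).const_mul 4
    refine hpow.mono' hk.aestronglyMeasurable.restrict ?_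
    filter_upwards [ae_restrict_mem measurableSet_Ioi] with t ht
    have ht0 : (0 : ℝ) < t := two_pos.trans ht
    rw [Real.norm_of_nonneg (by positivity)]
    exact mul_le_mul_of_nonneg_right (min_le_right _ _) (by positivity)
  exact integrable_comp_abs_of_integrableOn_Ioi
    (by simpa [Ioc_union_Ioi_eq_Ioi zero_le_two] using hnear.union hfar)

theorem integral_cutoffKernel_pos {s : ℝ} (hs0 : 0 < s) (hs1 : s < 1) :
    0 < ∫ r, cutoffKernel s r := by
  rw [integral_pos_iff_support_of_nonneg (cutoffKernel_nonneg s) (integrable_cutoffKernel hs0 hs1)]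
  refine lt_of_lt_of_le (by simp) (measure_mono (μ := volume) (s := Ioi 0) fun r hr => ?_)
  exact (cutoffKernel_pos (ne_of_gt hr)).ne'

theorem setIntegral_setIntegral_le_of_le_kernel {I S : Set ℝ} {F : ℝ → ℝ → ℝ} {h : ℝ → ℝ}
    (hI : MeasurableSet I) (hS : MeasurableSet S) (hSfin : volume S ≠ ⊤)
    (hh : Integrable h) (hh0 : 0 ≤ h) (hF0 : ∀ x ∈ I, ∀ y ∈ I, 0 ≤ F x y)
    (hF : ∀ x ∈ I, ∀ y ∈ I, F x y ≤ h (x - y))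
    (hFS : ∀ x ∈ I, ∀ y ∈ I, x ∉ S → y ∉ S → F x y = 0) :
    ∫ x in I, ∫ y in I, F x y ≤ 2 * volume.real S * ∫ r, h r := by
  set e : ℝ → ℝ := S.indicator 1
  have he0 : ∀ x, 0 ≤ e x := indicator_nonneg fun _ _ => zero_le_one
  have he_int : Integrable e := (integrable_indicator_iff hS).2 (integrableOn_const hSfin)
  have hbound : ∀ x ∈ I, ∀ y ∈ I, F x y ≤ e x * h (x - y) + e y * h (x - y) := by
    intro x hx y hy
    by_cases hxy : x ∈ S ∨ y ∈ S
    · have he1 : 1 ≤ e x + e y := by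
        rcases hxy with hxS | hyS
        · linarith [show e x = 1 by simp [e, hxS], he0 y]
        · linarith [show e y = 1 by simp [e, hyS], he0 x]
      linarith [hF x hx y hy, mul_le_mul_of_nonneg_right he1 (hh0 (x - y))]
    · push Not at hxy
      rw [hFS x hx y hy hxy.1 hxy.2]
      exact add_nonneg (mul_nonneg (he0 x) (hh0 _)) (mul_nonneg (he0 y) (hh0 _))
  -- `F` need not be measurable, so instead of Fubini we dominate each `y`-integral by `g x`:
  -- the `y`-integral of `e y * h (x - y)` is the convolution `(e ⋆ h) x`, of total mass `|S| ∫ h`.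
  let g : ℝ → ℝ := (fun x => e x * ∫ r, h r) + e ⋆[ContinuousLinearMap.mul ℝ ℝ] h
  have hg_int : Integrable g := (he_int.mul_const _).add (he_int.integrable_convolution _ hh)
  have hg0 : 0 ≤ g := fun x =>
    add_nonneg (mul_nonneg (he0 x) (integral_nonneg hh0))
      (integral_nonneg fun t => mul_nonneg (he0 t) (hh0 _))
  have hinner : ∀ x ∈ I, ∫ y in I, F x y ≤ g x := by
    intro x hx
    have hint₁ : Integrable fun y => e x * h (x - y) := (hh.comp_sub_left x).const_mul _
    have hint₂ : Integrable fun y => e y * h (x - y) :=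
      (hh.comp_sub_left x).bdd_mul (c := 1) he_int.aestronglyMeasurable
        (.of_forall fun y => (norm_indicator_le_norm_self _ _).trans (by simp))
    calc ∫ y in I, F x y ≤ ∫ y in I, (e x * h (x - y) + e y * h (x - y)) :=
          integral_mono_of_nonneg ((ae_restrict_mem hI).mono fun y hy => hF0 x hx y hy)
            (hint₁.add hint₂).integrableOn
            ((ae_restrict_mem hI).mono fun y hy => hbound x hx y hy)
      _ ≤ ∫ y, (e x * h (x - y) + e y * h (x - y)) :=
          setIntegral_le_integral (hint₁.add hint₂) (.of_forall fun y =>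
            add_nonneg (mul_nonneg (he0 x) (hh0 _)) (mul_nonneg (he0 y) (hh0 _)))
      _ = g x := by
          rw [integral_add hint₁ hint₂, integral_const_mul, integral_sub_left_eq_self]
          rfl
  calc ∫ x in I, ∫ y in I, F x y ≤ ∫ x in I, g x :=
        integral_mono_of_nonneg
          ((ae_restrict_mem hI).mono fun x hx => integral_nonneg_of_ae
            ((ae_restrict_mem hI).mono fun y hy => hF0 x hx y hy))
          hg_int.integrableOn ((ae_restrict_mem hI).mono hinner)
    _ ≤ ∫ x, g x := setIntegral_le_integral hg_int (.of_forall hg0)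
    _ = 2 * volume.real S * ∫ r, h r := by
        rw [integral_add' (he_int.mul_const _) (he_int.integrable_convolution _ hh),
          integral_mul_const, integral_convolution _ he_int hh, integral_indicator_one hS,
          ContinuousLinearMap.mul_apply']
        ring

theorem sq_sub_mul_le_cutoffKernel {P K : ℝ → ℝ} {s ρ Θ x y : ℝ} (hK0 : 0 ≤ K (x - y))
    (hK : x - y ≠ 0 → K (x - y) ≤ Θ * |x - y| ^ (-(1 + 2 * s)))
    (hLip : |P x - P y| ≤ ρ * |x - y|) (hosc : |P x - P y| ≤ 2 * ρ) :
    (P x - P y) ^ 2 * K (x - y) ≤ Θ * ρ ^ 2 * cutoffKernel s (x - y) := by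
  rcases eq_or_ne (x - y) 0 with hxy | hxy
  · have : P x - P y = 0 := abs_nonpos_iff.mp (by simpa [hxy] using hLip)
    simp [this, hxy]
  have hsq : (P x - P y) ^ 2 ≤ ρ ^ 2 * min (|x - y| ^ 2) 4 := by
    rw [mul_min_of_nonneg _ _ (sq_nonneg ρ), le_min_iff, ← sq_abs]
    constructor
    · simpa [mul_pow] using pow_le_pow_left₀ (abs_nonneg _) hLip 2
    · nlinarith [pow_le_pow_left₀ (abs_nonneg _) hosc 2]
  calc (P x - P y) ^ 2 * K (x - y)
      ≤ ρ ^ 2 * min (|x - y| ^ 2) 4 * (Θ * |x - y| ^ (-(1 + 2 * s))) :=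
        mul_le_mul hsq (hK hxy) hK0 (by positivity)
    _ = Θ * ρ ^ 2 * cutoffKernel s (x - y) := by unfold cutoffKernel; ring

/-- Energy of the glued function: if `P` is `ρ`-Lipschitz on `(x₁,x₂)`, constant equal to `ζ₂`
on `(x₁+1, x₂-1)`, with oscillation at most `2ρ` on `(x₁,x₂)`, and the kernel `K` is even,
nonnegative, bounded as `θ₀|r|^{-1-2s}χ_{|r|≤r₀} ≤ K(r) ≤ Θ₀|r|^{-1-2s}`, then
`∬_{(x₁,x₂)²} |P(x)-P(y)|² K(x-y) dx dy ≤ κ ρ²`, where `κ` depends only on `Θ₀` and `s`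
(not on `x₂ - x₁`). -/
theorem stmt_14 (s Θ₀ : ℝ) (hs : s ∈ Set.Ioo (0:ℝ) 1) (hΘ₀ : 0 < Θ₀) :
    ∃ κ > 0, ∀ (θ₀ r₀ ρ ζ₂ x₁ x₂ : ℝ) (K P : ℝ → ℝ),
      0 < θ₀ → 0 < r₀ → r₀ ≤ 1 → 0 < ρ → x₁ + 4 ≤ x₂ →
      (∀ r, K (-r) = K r) → (∀ r, 0 ≤ K r) →
      (∀ r, r ≠ 0 → |r| ≤ r₀ → θ₀ * |r| ^ (-(1 + 2 * s)) ≤ K r) →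
      (∀ r, r ≠ 0 → K r ≤ Θ₀ * |r| ^ (-(1 + 2 * s))) →
      (∀ x ∈ Set.Ioo x₁ x₂, ∀ y ∈ Set.Ioo x₁ x₂, |P x - P y| ≤ ρ * |x - y|) →
      (∀ x ∈ Set.Ioo (x₁ + 1) (x₂ - 1), P x = ζ₂) →
      (∀ x ∈ Set.Ioo x₁ x₂, ∀ y ∈ Set.Ioo x₁ x₂, |P x - P y| ≤ 2 * ρ) →
      (∫ x in Set.Ioo x₁ x₂, ∫ y in Set.Ioo x₁ x₂, (P x - P y) ^ 2 * K (x - y)) ≤ κ * ρ ^ 2 := by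
  obtain ⟨hs0, hs1⟩ := hs
  refine ⟨4 * Θ₀ * ∫ r, cutoffKernel s r,
    mul_pos (by positivity) (integral_cutoffKernel_pos hs0 hs1), ?_⟩
  intro θ₀ r₀ ρ ζ₂ x₁ x₂ K P _ _ _ _ hx _ hKnn _ hKup hLip hconst hosc
  have hS : volume.real (Ioo x₁ x₂ \ Ioo (x₁ + 1) (x₂ - 1)) = 2 := by
    rw [measureReal_sdiff (Ioo_subset_Ioo (by linarith) (by linarith)) measurableSet_Ioo
      measure_Ioo_lt_top.ne, Real.volume_real_Ioo_of_le (by linarith),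
      Real.volume_real_Ioo_of_le (by linarith)]
    ring
  have hP : ∀ x ∈ Ioo x₁ x₂, x ∉ Ioo x₁ x₂ \ Ioo (x₁ + 1) (x₂ - 1) → P x = ζ₂ := fun x hx hxS =>
    hconst x (by_contra fun h => hxS ⟨hx, h⟩)
  calc (∫ x in Ioo x₁ x₂, ∫ y in Ioo x₁ x₂, (P x - P y) ^ 2 * K (x - y))
      ≤ 2 * volume.real (Ioo x₁ x₂ \ Ioo (x₁ + 1) (x₂ - 1)) *
          ∫ r, Θ₀ * ρ ^ 2 * cutoffKernel s r :=
        setIntegral_setIntegral_le_of_le_kernel (S := Ioo x₁ x₂ \ Ioo (x₁ + 1) (x₂ - 1))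
          measurableSet_Ioo (measurableSet_Ioo.diff measurableSet_Ioo)
          ((measure_mono sdiff_subset).trans_lt measure_Ioo_lt_top).ne
          ((integrable_cutoffKernel hs0 hs1).const_mul _)
          (fun r => mul_nonneg (by positivity) (cutoffKernel_nonneg s r))
          (fun x _ y _ => mul_nonneg (sq_nonneg _) (hKnn _))
          (fun x hx y hy => sq_sub_mul_le_cutoffKernel (hKnn _) (hKup _) (hLip x hx y hy)
            (hosc x hx y hy))
          (fun x hx y hy hxS hyS => by simp [hP x hx hxS, hP y hy hyS])
    _ = 4 * Θ₀ * (∫ r, cutoffKernel s r) * ρ ^ 2 := by rw [hS, integral_const_mul]; ring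
end

section
/- Let W : ℝ → ℝ be continuous with W(x) ≥ c₀ ρ² for all x with dist(x, Z) ≥ ρ/2 (where Z ⊂ ℝ is a closed set and ρ ∈ (0,1)), and let a(x) ≥ a̲ > 0. Let Q : ℝ → ℝ be α-Hölder continuous with seminorm M on an interval J, and suppose there is p ∈ J with dist(Q(p), Z) > ρ. Set ℓ := (ρ/(2M))^{1/α}. Then for all x ∈ [p − ℓ, p + ℓ] ∩ J one has dist(Q(x), Z) > ρ/2, and consequently ∫_{[p−ℓ, p+ℓ] ∩ J} a(x) W(Q(x)) dx ≥ a̲ c₀ ρ² · |[p−ℓ,p+ℓ] ∩ J|. -/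
/-!
Hölder continuity gives `|Q x - Q p| ≤ M |x - p| ^ α ≤ ρ / 2` whenever `|x - p| ≤ ℓ`, so by the
`1`-Lipschitz property of `infDist` the point `Q x` stays at distance `> ρ / 2` from `Z`. There the
potential is at least `c₀ ρ²`, hence `a (W ∘ Q) ≥ a̲ c₀ ρ²` pointwise, and integrating gives the bound.
-/

open MeasureTheory Set Metric

theorem lt_infDist_of_dist_le {E : Type*} [PseudoMetricSpace E] {x y : E} {Z : Set E} {r s : ℝ}
    (hy : r + s < infDist y Z) (hxy : dist x y ≤ s) : r < infDist x Z := by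
  have := infDist_le_infDist_add_dist (s := Z) (x := y) (y := x)
  rw [dist_comm] at this
  linarith

theorem mul_rpow_le_of_le_rpow_one_div {M ε α t : ℝ} (hM : 0 < M) (hε : 0 ≤ ε) (hα : 0 < α)
    (ht : 0 ≤ t) (h : t ≤ (ε / M) ^ (1 / α)) : M * t ^ α ≤ ε := by
  rw [← le_div_iff₀' hM]
  calc t ^ α ≤ ((ε / M) ^ (1 / α)) ^ α := Real.rpow_le_rpow ht h hα.le
    _ = ε / M := by rw [one_div, Real.rpow_inv_rpow (div_nonneg hε hM.le) hα.ne']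

theorem stmt_17_general (W : ℝ → ℝ) (Z : Set ℝ)
    (ρ c₀ : ℝ) (hρ : ρ ∈ Set.Ioo (0:ℝ) 1) (hc₀ : 0 < c₀)
    (hW : ∀ x : ℝ, ρ / 2 ≤ Metric.infDist x Z → c₀ * ρ ^ 2 ≤ W x)
    (a : ℝ → ℝ) (abar : ℝ) (habar : 0 < abar) (ha : ∀ x, abar ≤ a x)
    (J : Set ℝ) (hJ : MeasurableSet J)
    (Q : ℝ → ℝ) (M α : ℝ) (hM : 0 < M) (hα : α ∈ Set.Ioc (0:ℝ) 1)
    (hQ : ∀ x ∈ J, ∀ y ∈ J, |Q x - Q y| ≤ M * |x - y| ^ α)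
    (p : ℝ) (hp : p ∈ J) (hdist : ρ < Metric.infDist (Q p) Z)
    (hint : IntegrableOn (fun x => a x * W (Q x))
      (Set.Icc (p - (ρ / (2 * M)) ^ (1 / α)) (p + (ρ / (2 * M)) ^ (1 / α)) ∩ J)) :
    (∀ x ∈ Set.Icc (p - (ρ / (2 * M)) ^ (1 / α)) (p + (ρ / (2 * M)) ^ (1 / α)) ∩ J,
        ρ / 2 < Metric.infDist (Q x) Z)
    ∧ abar * c₀ * ρ ^ 2 *
        (volume (Set.Icc (p - (ρ / (2 * M)) ^ (1 / α)) (p + (ρ / (2 * M)) ^ (1 / α)) ∩ J)).toReal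
      ≤ ∫ x in Set.Icc (p - (ρ / (2 * M)) ^ (1 / α)) (p + (ρ / (2 * M)) ^ (1 / α)) ∩ J,
          a x * W (Q x) := by
  set ℓ : ℝ := (ρ / (2 * M)) ^ (1 / α)
  have hclean : ∀ x ∈ Icc (p - ℓ) (p + ℓ) ∩ J, ρ / 2 < infDist (Q x) Z := by
    rintro x ⟨hxℓ, hxJ⟩
    rw [← Real.closedBall_eq_Icc, mem_closedBall, Real.dist_eq] at hxℓ
    refine lt_infDist_of_dist_le (y := Q p) (s := ρ / 2) (by linarith) ?_
    calc dist (Q x) (Q p) ≤ M * |x - p| ^ α := hQ x hxJ p hp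
      _ ≤ ρ / 2 := mul_rpow_le_of_le_rpow_one_div hM (by linarith [hρ.1]) hα.1 (abs_nonneg _)
          (by rwa [div_div])
  refine ⟨hclean, ?_⟩
  have hbound : ∀ x ∈ Icc (p - ℓ) (p + ℓ) ∩ J, abar * c₀ * ρ ^ 2 ≤ a x * W (Q x) := fun x hx => by
    rw [mul_assoc]
    exact mul_le_mul (ha x) (hW _ (hclean x hx).le) (by positivity) (habar.le.trans (ha x))
  have hfinite : volume (Icc (p - ℓ) (p + ℓ) ∩ J) ≠ ⊤ :=
    (measure_mono inter_subset_left).trans_lt measure_Icc_lt_top |>.ne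
  simpa only [smul_eq_mul, mul_comm, measureReal_def] using
    setIntegral_ge_of_const_le (measurableSet_Icc.inter hJ) hfinite hbound hint

/-- Energy cost of non-cleanness: if `Q` is `α`-Hölder with constant `M` on `J`, `W ≥ c₀ρ²`
wherever `dist(·,Z) ≥ ρ/2`, `a ≥ a̲ > 0`, and `dist(Q(p), Z) > ρ` at some `p ∈ J`, then with
`ℓ = (ρ/(2M))^{1/α}` one has `dist(Q(x), Z) > ρ/2` on `[p-ℓ, p+ℓ] ∩ J`, and hence
`∫_{[p-ℓ,p+ℓ]∩J} a W(Q) ≥ a̲ c₀ ρ² |[p-ℓ,p+ℓ] ∩ J|`. -/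
theorem stmt_17 (W : ℝ → ℝ) (hWc : Continuous W) (Z : Set ℝ) (hZ : IsClosed Z)
    (ρ c₀ : ℝ) (hρ : ρ ∈ Set.Ioo (0:ℝ) 1) (hc₀ : 0 < c₀)
    (hW : ∀ x : ℝ, ρ / 2 ≤ Metric.infDist x Z → c₀ * ρ ^ 2 ≤ W x)
    (a : ℝ → ℝ) (abar : ℝ) (habar : 0 < abar) (ha : ∀ x, abar ≤ a x)
    (J : Set ℝ) (hJ : MeasurableSet J)
    (Q : ℝ → ℝ) (M α : ℝ) (hM : 0 < M) (hα : α ∈ Set.Ioc (0:ℝ) 1)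
    (hQ : ∀ x ∈ J, ∀ y ∈ J, |Q x - Q y| ≤ M * |x - y| ^ α)
    (p : ℝ) (hp : p ∈ J) (hdist : ρ < Metric.infDist (Q p) Z)
    (hint : IntegrableOn (fun x => a x * W (Q x))
      (Set.Icc (p - (ρ / (2 * M)) ^ (1 / α)) (p + (ρ / (2 * M)) ^ (1 / α)) ∩ J)) :
    (∀ x ∈ Set.Icc (p - (ρ / (2 * M)) ^ (1 / α)) (p + (ρ / (2 * M)) ^ (1 / α)) ∩ J,
        ρ / 2 < Metric.infDist (Q x) Z)
    ∧ abar * c₀ * ρ ^ 2 *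
        (volume (Set.Icc (p - (ρ / (2 * M)) ^ (1 / α)) (p + (ρ / (2 * M)) ^ (1 / α)) ∩ J)).toReal
      ≤ ∫ x in Set.Icc (p - (ρ / (2 * M)) ^ (1 / α)) (p + (ρ / (2 * M)) ^ (1 / α)) ∩ J,
          a x * W (Q x) :=
  stmt_17_general W Z ρ c₀ hρ hc₀ hW a abar habar ha J hJ Q M α hM hα hQ p hp hdist hint
end
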